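/- arXiv:2110.10121 — 9 statements merged into one kernel-verified Lean document; each statement's English description precedes it below -/
import Mathlib

section
/- If (\{f_n\}, \{\tau_n\}) is a p-ASF for X with frame operator S_{f,τ}, then both (\{f_n ∘ S_{f,τ}^{-1}\}, \{τ_n\}) and (\{f_n\}, \{S_{f,τ}^{-1} τ_n\}) are p-ASFs for X. -/
/-!
Precomposing the analysis operator with `S⁻¹`, or postcomposing the synthesis operator
with `S⁻¹`, yields the analysis resp. synthesis operator of the new pair. Its frame operator
is then `θ_τ θ_f S⁻¹ = S S⁻¹ = I` resp. `S⁻¹ θ_τ θ_f = S⁻¹ S = I`, trivially invertible.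
-/

open scoped ENNReal
open Filter Topology

noncomputable section

/-- The sequence space `ℓ^p(ℕ)` over `ℝ`. -/
abbrev lpN (p : ℝ≥0∞) := lp (fun _ : ℕ => ℝ) p

/-- A pair `({f_n}, {τ_n})` is a p-approximate Bessel sequence (p-ABS) for `X`:
the analysis map `x ↦ (f_n x)_n` is a well-defined bounded linear operator into `ℓ^p`,
and the synthesis map `(a_n) ↦ Σ a_n τ_n` is a well-defined bounded linear operator. -/
def IsPABS (p : ℝ≥0∞) [Fact (1 ≤ p)] {X : Type*} [NormedAddCommGroup X] [NormedSpace ℝ X]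
    (f : ℕ → X →L[ℝ] ℝ) (τ : ℕ → X) : Prop :=
  (∃ θf : X →L[ℝ] lpN p, ∀ (x : X) (n : ℕ), (θf x) n = f n x) ∧
  (∃ θτ : lpN p →L[ℝ] X, ∀ a : lpN p, HasSum (fun n => (a n) • τ n) (θτ a))

/-- A pair `({f_n}, {τ_n})` is a p-approximate Schauder frame (p-ASF) for `X`:
it is a p-ABS whose frame operator `S_{f,τ} = θ_τ ∘ θ_f` is bounded invertible. -/
def IsPASF (p : ℝ≥0∞) [Fact (1 ≤ p)] {X : Type*} [NormedAddCommGroup X] [NormedSpace ℝ X]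
    (f : ℕ → X →L[ℝ] ℝ) (τ : ℕ → X) : Prop :=
  ∃ (θf : X →L[ℝ] lpN p) (θτ : lpN p →L[ℝ] X) (S : X ≃L[ℝ] X),
    (∀ (x : X) (n : ℕ), (θf x) n = f n x) ∧
    (∀ a : lpN p, HasSum (fun n => (a n) • τ n) (θτ a)) ∧
    (S : X →L[ℝ] X) = θτ.comp θf

section

variable {p : ℝ≥0∞} [Fact (1 ≤ p)] {X : Type*} [NormedAddCommGroup X] [NormedSpace ℝ X]

theorem IsPASF.of_comp_eq_id {f : ℕ → X →L[ℝ] ℝ} {τ : ℕ → X}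
    {θf : X →L[ℝ] lpN p} {θτ : lpN p →L[ℝ] X}
    (hθf : ∀ (x : X) (n : ℕ), (θf x) n = f n x)
    (hθτ : ∀ a : lpN p, HasSum (fun n => (a n) • τ n) (θτ a))
    (hid : θτ.comp θf = ContinuousLinearMap.id ℝ X) :
    IsPASF p f τ :=
  ⟨θf, θτ, ContinuousLinearEquiv.refl ℝ X, hθf, hθτ, hid.symm⟩

theorem synthesis_comp {Y : Type*} [NormedAddCommGroup Y] [NormedSpace ℝ Y]
    {τ : ℕ → X} {θτ : lpN p →L[ℝ] X}
    (hθτ : ∀ a : lpN p, HasSum (fun n => (a n) • τ n) (θτ a)) (T : X →L[ℝ] Y) (a : lpN p) :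
    HasSum (fun n => (a n) • T (τ n)) (T.comp θτ a) := by
  simpa only [map_smul, ContinuousLinearMap.comp_apply] using T.hasSum (hθτ a)

end

theorem pASF_canonical_duals_are_pASF_general
    {X : Type*} [NormedAddCommGroup X] [NormedSpace ℝ X]
    (p : ℝ≥0∞) [Fact (1 ≤ p)]
    (f : ℕ → X →L[ℝ] ℝ) (τ : ℕ → X)
    (θf : X →L[ℝ] lpN p) (θτ : lpN p →L[ℝ] X) (S : X ≃L[ℝ] X)
    (hθf : ∀ (x : X) (n : ℕ), (θf x) n = f n x)
    (hθτ : ∀ a : lpN p, HasSum (fun n => (a n) • τ n) (θτ a))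
    (hS : (S : X →L[ℝ] X) = θτ.comp θf) :
    IsPASF p (fun n => (f n).comp (S.symm : X →L[ℝ] X)) τ ∧
    IsPASF p f (fun n => S.symm (τ n)) := by
  constructor
  · refine IsPASF.of_comp_eq_id (θf := θf.comp (S.symm : X →L[ℝ] X))
      (fun x n => hθf _ n) hθτ ?_
    rw [← ContinuousLinearMap.comp_assoc, ← hS, ContinuousLinearEquiv.coe_comp_coe_symm]
  · refine IsPASF.of_comp_eq_id hθf (synthesis_comp hθτ (S.symm : X →L[ℝ] X)) ?_
    rw [ContinuousLinearMap.comp_assoc, ← hS, ContinuousLinearEquiv.coe_symm_comp_coe]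

/-- if `({f_n},{τ_n})` is a p-ASF with frame operator `S`, then both
`({f_n ∘ S⁻¹},{τ_n})` and `({f_n},{S⁻¹ τ_n})` are p-ASFs. -/
theorem pASF_canonical_duals_are_pASF
    {X : Type*} [NormedAddCommGroup X] [NormedSpace ℝ X] [CompleteSpace X]
    (p : ℝ≥0∞) [Fact (1 ≤ p)] (hp : p ≠ ∞)
    (f : ℕ → X →L[ℝ] ℝ) (τ : ℕ → X)
    (θf : X →L[ℝ] lpN p) (θτ : lpN p →L[ℝ] X) (S : X ≃L[ℝ] X)
    (hθf : ∀ (x : X) (n : ℕ), (θf x) n = f n x)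
    (hθτ : ∀ a : lpN p, HasSum (fun n => (a n) • τ n) (θτ a))
    (hS : (S : X →L[ℝ] X) = θτ.comp θf) :
    IsPASF p (fun n => (f n).comp (S.symm : X →L[ℝ] X)) τ ∧
    IsPASF p f (fun n => S.symm (τ n)) :=
  pASF_canonical_duals_are_pASF_general p f τ θf θτ S hθf hθτ hS
end
end

section
/- Let R be the right-shift and L the left-shift operator on ℓ^p(ℕ). Define f_n := ζ_n, τ_n := R e_n, g_n := ζ_n ∘ L, ω_n := e_n. Then (\{f_n\},\{τ_n\}) and (\{g_n\},\{ω_n\}) are p-approximate Bessel sequences for ℓ^p(ℕ) with ‖I − θ_ω θ_f‖ < 1, but ‖I − θ_τ θ_g‖ = 1. Hence the two defining conditions of approximately dual p-ABSs are independent. -/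
open scoped ENNReal
open Filter Topology

noncomputable section

lemma hasSum_smul_single (p : ℝ≥0∞) [Fact (1 ≤ p)] (hp : p ≠ ∞) (a : lpN p) :
    HasSum (fun n => (a n) • (lp.single p n 1 : lpN p)) a := by
  have h := lp.hasSum_single hp a
  convert h using 2 with n
  rw [← lp.single_smul, smul_eq_mul, mul_one]

set_option maxHeartbeats 1000000 in
/-- with `f_n = ζ_n`, `τ_n = R e_n`, `g_n = ζ_n ∘ L`, `ω_n = e_n` on `ℓ^p(ℕ)`,
both pairs are p-ABSs, `‖I - θ_ω θ_f‖ < 1` but `‖I - θ_τ θ_g‖ = 1`. -/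
theorem approx_dual_conditions_independent
    (p : ℝ≥0∞) [Fact (1 ≤ p)] (hp : p ≠ ∞)
    (ζ : ℕ → lpN p →L[ℝ] ℝ) (hζ : ∀ (a : lpN p) (n : ℕ), ζ n a = a n)
    (R L : lpN p →L[ℝ] lpN p)
    (hR0 : ∀ a : lpN p, (R a) 0 = 0)
    (hR : ∀ (a : lpN p) (n : ℕ), (R a) (n + 1) = a n)
    (hL : ∀ (a : lpN p) (n : ℕ), (L a) n = a (n + 1)) :
    IsPABS p (fun n => ζ n) (fun n => R (lp.single p n 1)) ∧
    IsPABS p (fun n => (ζ n).comp L) (fun n => lp.single p n 1) ∧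
    (∀ (θf θω : lpN p →L[ℝ] lpN p),
      (∀ (x : lpN p) (n : ℕ), (θf x) n = ζ n x) →
      (∀ a : lpN p, HasSum (fun n => (a n) • (lp.single p n 1 : lpN p)) (θω a)) →
      ‖ContinuousLinearMap.id ℝ (lpN p) - θω.comp θf‖ < 1) ∧
    (∀ (θτ θg : lpN p →L[ℝ] lpN p),
      (∀ a : lpN p, HasSum (fun n => (a n) • R (lp.single p n 1)) (θτ a)) →
      (∀ (x : lpN p) (n : ℕ), (θg x) n = ζ n (L x)) →
      ‖ContinuousLinearMap.id ℝ (lpN p) - θτ.comp θg‖ = 1) := by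
  have hp0 : (0:ℝ≥0∞) < p := lt_of_lt_of_le zero_lt_one Fact.out
  have hp' : 0 < p.toReal := ENNReal.toReal_pos hp0.ne' hp
  refine ⟨⟨⟨ContinuousLinearMap.id ℝ (lpN p), fun x n => (hζ x n).symm⟩,
      ⟨R, fun a => ?_⟩⟩, ⟨⟨L, fun x n => (hζ (L x) n).symm⟩,
      ⟨ContinuousLinearMap.id ℝ (lpN p), fun a => hasSum_smul_single p hp a⟩⟩,
      fun θf θω hθf hθω => ?_, fun θτ θg hθτ hθω => ?_⟩
  · have h := (hasSum_smul_single p hp a).mapL R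
    simpa only [map_smul] using h
  · have hω : ∀ a, θω a = a := fun a => ((hasSum_smul_single p hp a).unique (hθω a)).symm
    have hf : ∀ x, θf x = x := by
      intro x
      apply lp.ext
      funext n
      rw [hθf x n, hζ]
    have hcomp : θω.comp θf = ContinuousLinearMap.id ℝ (lpN p) := by
      apply ContinuousLinearMap.ext
      intro x
      show θω (θf x) = x
      rw [hf, hω]
    rw [hcomp, sub_self, norm_zero]
    exact zero_lt_one
  · have hτ : ∀ a, θτ a = R a := by
      intro a
      have h := (hasSum_smul_single p hp a).mapL R
      simp only [map_smul] at h
      exact (hθτ a).unique h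
    have hg : ∀ x, θg x = L x := by
      intro x
      apply lp.ext
      funext n
      rw [hθω x n, hζ]
    set T := ContinuousLinearMap.id ℝ (lpN p) - θτ.comp θg with hT
    have key : ∀ a : lpN p, T a = lp.single p 0 (a 0) := by
      intro a
      have hTa : T a = a - R (L a) := by
        show a - θτ (θg a) = a - R (L a)
        rw [hg, hτ]
      apply lp.ext
      funext n
      have hsub : (⇑(T a) : ℕ → ℝ) = ⇑a - ⇑(R (L a)) := by rw [hTa]; exact lp.coeFn_sub _ _
      rw [hsub]
      cases n with
      | zero =>
        simp only [Pi.sub_apply, hR0, sub_zero]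
        exact (lp.single_apply_self (E := fun _ : ℕ => ℝ) p 0 (a 0)).symm
      | succ m =>
        have h1 : (R (L a)) (m + 1) = a (m + 1) := by rw [hR, hL]
        simp only [Pi.sub_apply, h1, sub_self]
        exact (lp.single_apply_ne (E := fun _ : ℕ => ℝ) p 0 (a 0) (Nat.succ_ne_zero m)).symm
    refine le_antisymm ?_ ?_
    · refine ContinuousLinearMap.opNorm_le_bound _ zero_le_one fun a => ?_
      rw [key a, one_mul]
      have h2 : ‖(lp.single p 0 (a 0) : lpN p)‖ = ‖a 0‖ := lp.norm_single (E := fun _ : ℕ => ℝ) hp0 0 (a 0)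
      rw [h2]
      exact lp.norm_apply_le_norm hp0.ne' a 0
    · have he : ‖(lp.single p 0 1 : lpN p)‖ = 1 := by
        have h3 : ‖(lp.single p 0 ((fun _ : ℕ => (1:ℝ)) 0) : lpN p)‖ = ‖(1:ℝ)‖ :=
          lp.norm_single (E := fun _ : ℕ => ℝ) hp0 0 ((fun _ : ℕ => (1:ℝ)) 0)
        simpa using h3
      have h1 : T (lp.single p 0 1) = lp.single p 0 1 := by
        rw [key]
        congr 1
      have h4 := T.le_opNorm (lp.single p 0 1)
      rw [h1, he, mul_one] at h4
      exact h4
end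
end

section
/- Let L and R be the left- and right-shift operators on ℓ^p(ℕ). Define f_n := ζ_n, τ_n := L e_n, g_n := ζ_n ∘ R, ω_n := e_n. Then (\{f_n\},\{τ_n\}) and (\{g_n\},\{ω_n\}) are approximately dual p-approximate Bessel sequences for ℓ^p(ℕ), yet neither is a p-approximate Schauder frame (their frame operators θ_τ θ_f = L and θ_ω θ_g = R are not invertible). -/
open scoped ENNReal
open Filter Topology

noncomputable section

/-!
`f_n = ζ_n` and `g_n = ζ_n ∘ R` force the analysis operators to be `I` and `R`, while
`ω_n = e_n` and `τ_n = L e_n` force the synthesis operators to be `I` and `L` (every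
`a ∈ ℓ^p`, `p < ∞`, is the sum of `a n • e_n`, and `θ_τ a = Σ a n • L e_n = L a` by continuity).
Hence `θ_ω θ_f = I` and `θ_τ θ_g = L R = I`, so both pairs are approximately dual with defect `0`.
The frame operators are `θ_τ θ_f = L` and `θ_ω θ_g = R`: `L` kills `e_0` and `R` misses `e_0`.
-/

section Synthesis

variable {ι 𝕜 : Type*} [DecidableEq ι] [NormedRing 𝕜] {p : ℝ≥0∞} [Fact (1 ≤ p)]

theorem lp.hasSum_smul_single_one (hp : p ≠ ∞) (a : lp (fun _ : ι => 𝕜) p) :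
    HasSum (fun i => a i • lp.single p i (1 : 𝕜)) a := by
  simpa only [← lp.single_smul, smul_eq_mul, mul_one] using lp.hasSum_single hp a

variable {X : Type*} [NormedAddCommGroup X] [Module 𝕜 X]

theorem hasSum_smul_apply_single (hp : p ≠ ∞) (T : lp (fun _ : ι => 𝕜) p →L[𝕜] X)
    (a : lp (fun _ : ι => 𝕜) p) :
    HasSum (fun i => a i • T (lp.single p i 1)) (T a) := by
  simpa only [map_smul] using (lp.hasSum_smul_single_one hp a).mapL T

theorem eq_of_hasSum_smul_apply_single (hp : p ≠ ∞) {T θ : lp (fun _ : ι => 𝕜) p →L[𝕜] X}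
    (hθ : ∀ a, HasSum (fun i => a i • T (lp.single p i 1)) (θ a)) : θ = T :=
  ContinuousLinearMap.ext fun a => (hθ a).unique (hasSum_smul_apply_single hp T a)

end Synthesis

theorem ContinuousLinearMap.ext_lp {ι 𝕜 X : Type*} [NormedRing 𝕜] [NormedAddCommGroup X]
    [Module 𝕜 X] {p : ℝ≥0∞} [Fact (1 ≤ p)] {θ T : X →L[𝕜] lp (fun _ : ι => 𝕜) p}
    (h : ∀ x i, θ x i = T x i) : θ = T :=
  ContinuousLinearMap.ext fun x => lp.ext <| funext (h x)

theorem IsPASF.bijective_comp {p : ℝ≥0∞} [Fact (1 ≤ p)] {X : Type*} [NormedAddCommGroup X]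
    [NormedSpace ℝ X] {f : ℕ → X →L[ℝ] ℝ} {τ : ℕ → X} (hfτ : IsPASF p f τ)
    {θf : X →L[ℝ] lpN p} {θτ : lpN p →L[ℝ] X} (hf : ∀ x n, θf x n = f n x)
    (hτ : ∀ a : lpN p, HasSum (fun n => a n • τ n) (θτ a)) :
    Function.Bijective (θτ.comp θf) := by
  obtain ⟨θf', θτ', S, hf', hτ', hS⟩ := hfτ
  have hθf : θf' = θf := ContinuousLinearMap.ext_lp fun x n => (hf' x n).trans (hf x n).symm
  have hθτ : θτ' = θτ := ContinuousLinearMap.ext fun a => (hτ' a).unique (hτ a)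
  rw [← hθf, ← hθτ, ← hS]
  exact S.bijective

section Shifts

variable {p : ℝ≥0∞} [Fact (1 ≤ p)] {R L : lpN p →L[ℝ] lpN p}

theorem comp_eq_id_of_shifts (hR : ∀ (a : lpN p) n, R a (n + 1) = a n)
    (hL : ∀ (a : lpN p) n, L a n = a (n + 1)) :
    L.comp R = ContinuousLinearMap.id ℝ (lpN p) :=
  ContinuousLinearMap.ext_lp fun a n => (hL (R a) n).trans (hR a n)

theorem not_injective_of_left_shift (hL : ∀ (a : lpN p) n, L a n = a (n + 1)) :
    ¬ Function.Injective L := by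
  intro hinj
  have hLe₀ : L (lp.single p 0 1) = 0 :=
    lp.ext <| funext fun n => (hL _ n).trans (lp.single_apply_ne p 0 _ n.succ_ne_zero)
  have he₀ : lp.single p 0 (1 : ℝ) = 0 := hinj (hLe₀.trans (map_zero L).symm)
  simpa using congrArg (fun a : lpN p => a 0) he₀

theorem not_surjective_of_right_shift (hR0 : ∀ a : lpN p, R a 0 = 0) :
    ¬ Function.Surjective R := by
  intro hsurj
  obtain ⟨a, ha⟩ := hsurj (lp.single p 0 1)
  have h := congrArg (fun b : lpN p => b 0) ha
  simp only [hR0, lp.single_apply_self] at h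
  exact zero_ne_one h

end Shifts

/-- with `f_n = ζ_n`, `τ_n = L e_n`, `g_n = ζ_n ∘ R`, `ω_n = e_n` on `ℓ^p(ℕ)`,
the two pairs are approximately dual p-ABSs, yet neither is a p-ASF. -/
theorem approx_dual_pABS_not_pASF
    (p : ℝ≥0∞) [Fact (1 ≤ p)] (hp : p ≠ ∞)
    (ζ : ℕ → lpN p →L[ℝ] ℝ) (hζ : ∀ (a : lpN p) (n : ℕ), ζ n a = a n)
    (R L : lpN p →L[ℝ] lpN p)
    (hR0 : ∀ a : lpN p, (R a) 0 = 0)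
    (hR : ∀ (a : lpN p) (n : ℕ), (R a) (n + 1) = a n)
    (hL : ∀ (a : lpN p) (n : ℕ), (L a) n = a (n + 1)) :
    IsPABS p (fun n => ζ n) (fun n => L (lp.single p n 1)) ∧
    IsPABS p (fun n => (ζ n).comp R) (fun n => lp.single p n 1) ∧
    (∀ (θf θω : lpN p →L[ℝ] lpN p),
      (∀ (x : lpN p) (n : ℕ), (θf x) n = ζ n x) →
      (∀ a : lpN p, HasSum (fun n => (a n) • (lp.single p n 1 : lpN p)) (θω a)) →
      ‖ContinuousLinearMap.id ℝ (lpN p) - θω.comp θf‖ < 1) ∧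
    (∀ (θτ θg : lpN p →L[ℝ] lpN p),
      (∀ a : lpN p, HasSum (fun n => (a n) • L (lp.single p n 1)) (θτ a)) →
      (∀ (x : lpN p) (n : ℕ), (θg x) n = ζ n (R x)) →
      ‖ContinuousLinearMap.id ℝ (lpN p) - θτ.comp θg‖ < 1) ∧
    ¬ IsPASF p (fun n => ζ n) (fun n => L (lp.single p n 1)) ∧
    ¬ IsPASF p (fun n => (ζ n).comp R) (fun n => lp.single p n 1) := by
  have hθf : ∀ x n, ContinuousLinearMap.id ℝ (lpN p) x n = ζ n x := fun x n => (hζ x n).symm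
  have hθg : ∀ x n, R x n = (ζ n).comp R x := fun x n => (hζ (R x) n).symm
  have hθω : ∀ a : lpN p, HasSum (fun n => a n • (lp.single p n 1 : lpN p))
      (ContinuousLinearMap.id ℝ (lpN p) a) := lp.hasSum_smul_single_one hp
  have hθτ := hasSum_smul_apply_single hp L
  refine ⟨⟨⟨_, hθf⟩, ⟨L, hθτ⟩⟩, ⟨⟨R, hθg⟩, ⟨_, hθω⟩⟩, ?_, ?_, ?_, ?_⟩
  · intro θf θω hf hω
    rw [ContinuousLinearMap.ext_lp fun x n => (hf x n).trans (hθf x n).symm,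
      ContinuousLinearMap.ext fun a => (hω a).unique (hθω a)]
    simp
  · intro θτ θg hτ hg
    rw [eq_of_hasSum_smul_apply_single hp hτ,
      ContinuousLinearMap.ext_lp fun x n => (hg x n).trans (hθg x n).symm,
      comp_eq_id_of_shifts hR hL]
    simp
  · exact fun h => not_injective_of_left_shift hL (h.bijective_comp hθf hθτ).1
  · exact fun h => not_surjective_of_right_shift hR0 (h.bijective_comp hθg hθω).2
end
end

section
/- If (\{f_n\},\{τ_n\}) and (\{g_n\},\{ω_n\}) are approximately dual p-ABSs for X, then (\{g_n ∘ S_{g,τ}^{-1}\}, \{S_{f,ω}^{-1} ω_n\}) is a dual p-ABS for (\{f_n\},\{τ_n\}), i.e., x = Σ_n (g_n S_{g,τ}^{-1})(x) τ_n = Σ_n f_n(x) S_{f,ω}^{-1} ω_n for all x ∈ X. -/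
open scoped ENNReal
open Filter Topology

noncomputable section

/-!
The series `Σ g_n(y) τ_n` sums to `θ_τ θ_g y = S_{g,τ} y`, so taking `y = S_{g,τ}⁻¹ x` gives `x`;
dually, `Σ f_n(x) ω_n = S_{f,ω} x`, and applying the bounded operator `S_{f,ω}⁻¹` termwise gives `x`.
-/

theorem HasSum.smul_mapL {ι 𝕜 E F : Type*} [NontriviallyNormedField 𝕜]
    [NormedAddCommGroup E] [NormedSpace 𝕜 E] [NormedAddCommGroup F] [NormedSpace 𝕜 F]
    (T : E →L[𝕜] F) {c : ι → 𝕜} {v : ι → E} {s : E} (h : HasSum (fun i => c i • v i) s) :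
    HasSum (fun i => c i • T (v i)) (T s) := by
  simpa only [map_smul] using h.mapL T

section

variable {X : Type*} [NormedAddCommGroup X] [NormedSpace ℝ X] {p : ℝ≥0∞} [Fact (1 ≤ p)]
  {f : ℕ → X →L[ℝ] ℝ} {τ : ℕ → X} {θf : X →L[ℝ] lpN p} {θτ : lpN p →L[ℝ] X}

theorem isPABS_comp_map (hθf : ∀ (x : X) (n : ℕ), (θf x) n = f n x)
    (hθτ : ∀ a : lpN p, HasSum (fun n => (a n) • τ n) (θτ a)) (A B : X →L[ℝ] X) :
    IsPABS p (fun n => (f n).comp A) (fun n => B (τ n)) :=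
  ⟨⟨θf.comp A, fun x n => hθf (A x) n⟩, ⟨B.comp θτ, fun a => (hθτ a).smul_mapL B⟩⟩

theorem hasSum_frameOperator (hθf : ∀ (x : X) (n : ℕ), (θf x) n = f n x)
    (hθτ : ∀ a : lpN p, HasSum (fun n => (a n) • τ n) (θτ a))
    {S : X →L[ℝ] X} (hS : S = θτ.comp θf) (x : X) :
    HasSum (fun n => f n x • τ n) (S x) := by
  simpa only [hS, ContinuousLinearMap.comp_apply, hθf] using hθτ (θf x)

end

theorem approx_dual_generates_dual_left_general
    {X : Type*} [NormedAddCommGroup X] [NormedSpace ℝ X]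
    (p : ℝ≥0∞) [Fact (1 ≤ p)]
    (f g : ℕ → X →L[ℝ] ℝ) (τ ω : ℕ → X)
    (θf θg : X →L[ℝ] lpN p) (θτ θω : lpN p →L[ℝ] X)
    (hθf : ∀ (x : X) (n : ℕ), (θf x) n = f n x)
    (hθg : ∀ (x : X) (n : ℕ), (θg x) n = g n x)
    (hθτ : ∀ a : lpN p, HasSum (fun n => (a n) • τ n) (θτ a))
    (hθω : ∀ a : lpN p, HasSum (fun n => (a n) • ω n) (θω a))
    (Sfω Sgτ : X ≃L[ℝ] X)
    (hSfω : (Sfω : X →L[ℝ] X) = θω.comp θf)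
    (hSgτ : (Sgτ : X →L[ℝ] X) = θτ.comp θg) :
    IsPABS p (fun n => (g n).comp (Sgτ.symm : X →L[ℝ] X)) (fun n => Sfω.symm (ω n)) ∧
    (∀ x : X,
      HasSum (fun n => g n (Sgτ.symm x) • τ n) x ∧
      HasSum (fun n => f n x • Sfω.symm (ω n)) x) := by
  refine ⟨isPABS_comp_map hθg hθω Sgτ.symm Sfω.symm, fun x => ⟨?_, ?_⟩⟩
  · simpa using hasSum_frameOperator hθg hθτ hSgτ (Sgτ.symm x)
  · simpa using (hasSum_frameOperator hθf hθω hSfω x).smul_mapL (Sfω.symm : X →L[ℝ] X)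

/-- approximately dual p-ABSs generate a dual:
`({g_n ∘ S_{g,τ}⁻¹}, {S_{f,ω}⁻¹ ω_n})` is a dual p-ABS for `({f_n},{τ_n})`. -/
theorem approx_dual_generates_dual_left
    {X : Type*} [NormedAddCommGroup X] [NormedSpace ℝ X] [CompleteSpace X]
    (p : ℝ≥0∞) [Fact (1 ≤ p)] (hp : p ≠ ∞)
    (f g : ℕ → X →L[ℝ] ℝ) (τ ω : ℕ → X)
    (θf θg : X →L[ℝ] lpN p) (θτ θω : lpN p →L[ℝ] X)
    (hθf : ∀ (x : X) (n : ℕ), (θf x) n = f n x)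
    (hθg : ∀ (x : X) (n : ℕ), (θg x) n = g n x)
    (hθτ : ∀ a : lpN p, HasSum (fun n => (a n) • τ n) (θτ a))
    (hθω : ∀ a : lpN p, HasSum (fun n => (a n) • ω n) (θω a))
    (h1 : ‖ContinuousLinearMap.id ℝ X - θω.comp θf‖ < 1)
    (h2 : ‖ContinuousLinearMap.id ℝ X - θτ.comp θg‖ < 1)
    (Sfω Sgτ : X ≃L[ℝ] X)
    (hSfω : (Sfω : X →L[ℝ] X) = θω.comp θf)
    (hSgτ : (Sgτ : X →L[ℝ] X) = θτ.comp θg) :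
    IsPABS p (fun n => (g n).comp (Sgτ.symm : X →L[ℝ] X)) (fun n => Sfω.symm (ω n)) ∧
    (∀ x : X,
      HasSum (fun n => g n (Sgτ.symm x) • τ n) x ∧
      HasSum (fun n => f n x • Sfω.symm (ω n)) x) :=
  approx_dual_generates_dual_left_general p f g τ ω θf θg θτ θω hθf hθg hθτ hθω Sfω Sgτ hSfω hSgτ
end
end

section
/- Let (\{f_n\},\{τ_n\}) be a p-ABS for X. A p-ABS (\{g_n\},\{ω_n\}) is an approximately dual p-ABS for (\{f_n\},\{τ_n\}) if and only if there exist bounded invertible operators U, V : X → X with ‖I_X − U‖ < 1 and ‖I_X − V‖ < 1 such that (\{g_n ∘ U^{-1}\}, \{V^{-1} ω_n\}) is a dual p-ABS for (\{f_n\},\{τ_n\}). -/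
open scoped ENNReal
open Filter Topology

noncomputable section

/-!
A dual pair with respect to `U, V` is the same as the identities `θ_τ θ_g = U` and
`θ_ω θ_f = V`: both sides are computed by the same series, and limits are unique. So `U` and `V`
are forced to be the two frame operators, and the norm conditions on `U, V` are the
approximate-duality conditions. Conversely, an operator within distance `1` of the identity is
invertible by the Neumann series.
-/

section FrameOperator

variable {X : Type*} [NormedAddCommGroup X] [NormedSpace ℝ X] {p : ℝ≥0∞} [Fact (1 ≤ p)]

theorem ContinuousLinearEquiv.exists_coe_eq_of_norm_id_sub_lt_one
    {𝕜 E : Type*} [NontriviallyNormedField 𝕜] [NormedAddCommGroup E] [NormedSpace 𝕜 E]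
    [CompleteSpace E] {T : E →L[𝕜] E} (hT : ‖ContinuousLinearMap.id 𝕜 E - T‖ < 1) :
    ∃ U : E ≃L[𝕜] E, (U : E →L[𝕜] E) = T :=
  ⟨.ofUnit (Units.oneSub _ hT), sub_sub_cancel 1 T⟩

theorem hasSum_synthesis_analysis {f : ℕ → X →L[ℝ] ℝ} {τ : ℕ → X}
    {θf : X →L[ℝ] lpN p} {θτ : lpN p →L[ℝ] X}
    (hθf : ∀ (x : X) (n : ℕ), (θf x) n = f n x)
    (hθτ : ∀ a : lpN p, HasSum (fun n => (a n) • τ n) (θτ a)) (x : X) :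
    HasSum (fun n => f n x • τ n) (θτ (θf x)) := by
  simpa only [hθf] using hθτ (θf x)

theorem synthesis_comp_analysis_eq_iff {f : ℕ → X →L[ℝ] ℝ} {τ : ℕ → X}
    {θf : X →L[ℝ] lpN p} {θτ : lpN p →L[ℝ] X}
    (hθf : ∀ (x : X) (n : ℕ), (θf x) n = f n x)
    (hθτ : ∀ a : lpN p, HasSum (fun n => (a n) • τ n) (θτ a)) (T : X →L[ℝ] X) :
    θτ.comp θf = T ↔ ∀ x, HasSum (fun n => f n x • τ n) (T x) := by
  refine ⟨fun h x => h ▸ hasSum_synthesis_analysis hθf hθτ x, fun h => ?_⟩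
  ext x
  exact (hasSum_synthesis_analysis hθf hθτ x).unique (h x)

theorem forall_hasSum_comp_symm_iff (f : ℕ → X →L[ℝ] ℝ) (τ : ℕ → X) (U : X ≃L[ℝ] X) :
    (∀ x, HasSum (fun n => f n (U.symm x) • τ n) x) ↔
      ∀ x, HasSum (fun n => f n x • τ n) (U x) := by
  rw [U.surjective.forall]
  simp only [ContinuousLinearEquiv.symm_apply_apply]

theorem forall_hasSum_smul_symm_iff (f : ℕ → X →L[ℝ] ℝ) (τ : ℕ → X) (V : X ≃L[ℝ] X) :
    (∀ x, HasSum (fun n => f n x • V.symm (τ n)) x) ↔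
      ∀ x, HasSum (fun n => f n x • τ n) (V x) := by
  refine forall_congr' fun x => ?_
  simp only [← map_smul, V.symm.hasSum, ContinuousLinearEquiv.symm_symm]

theorem IsPABS.comp_map {f : ℕ → X →L[ℝ] ℝ} {τ : ℕ → X} (h : IsPABS p f τ)
    (A B : X →L[ℝ] X) : IsPABS p (fun n => (f n).comp A) (fun n => B (τ n)) :=
  let ⟨⟨θf, hθf⟩, ⟨θτ, hθτ⟩⟩ := h
  ⟨⟨θf.comp A, fun x n => hθf (A x) n⟩,
    ⟨B.comp θτ, fun a => by
      simpa only [map_smul, ContinuousLinearMap.comp_apply] using B.hasSum (hθτ a)⟩⟩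

end FrameOperator

theorem approx_dual_iff_perturbed_dual_general
    {X : Type*} [NormedAddCommGroup X] [NormedSpace ℝ X] [CompleteSpace X]
    (p : ℝ≥0∞) [Fact (1 ≤ p)]
    (f g : ℕ → X →L[ℝ] ℝ) (τ ω : ℕ → X)
    (θf θg : X →L[ℝ] lpN p) (θτ θω : lpN p →L[ℝ] X)
    (hθf : ∀ (x : X) (n : ℕ), (θf x) n = f n x)
    (hθg : ∀ (x : X) (n : ℕ), (θg x) n = g n x)
    (hθτ : ∀ a : lpN p, HasSum (fun n => (a n) • τ n) (θτ a))
    (hθω : ∀ a : lpN p, HasSum (fun n => (a n) • ω n) (θω a)) :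
    (‖ContinuousLinearMap.id ℝ X - θω.comp θf‖ < 1 ∧
     ‖ContinuousLinearMap.id ℝ X - θτ.comp θg‖ < 1) ↔
    ∃ U V : X ≃L[ℝ] X,
      ‖ContinuousLinearMap.id ℝ X - (U : X →L[ℝ] X)‖ < 1 ∧
      ‖ContinuousLinearMap.id ℝ X - (V : X →L[ℝ] X)‖ < 1 ∧
      IsPABS p (fun n => (g n).comp (U.symm : X →L[ℝ] X)) (fun n => V.symm (ω n)) ∧
      (∀ x : X,
        HasSum (fun n => g n (U.symm x) • τ n) x ∧
        HasSum (fun n => f n x • V.symm (ω n)) x) := by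
  have hU (U : X ≃L[ℝ] X) : (∀ x, HasSum (fun n => g n (U.symm x) • τ n) x) ↔ θτ.comp θg = U :=
    (forall_hasSum_comp_symm_iff g τ U).trans (synthesis_comp_analysis_eq_iff hθg hθτ U).symm
  have hV (V : X ≃L[ℝ] X) : (∀ x, HasSum (fun n => f n x • V.symm (ω n)) x) ↔ θω.comp θf = V :=
    (forall_hasSum_smul_symm_iff f ω V).trans (synthesis_comp_analysis_eq_iff hθf hθω V).symm
  constructor
  · rintro ⟨hSV, hSU⟩
    obtain ⟨U, hUS⟩ := ContinuousLinearEquiv.exists_coe_eq_of_norm_id_sub_lt_one hSU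
    obtain ⟨V, hVS⟩ := ContinuousLinearEquiv.exists_coe_eq_of_norm_id_sub_lt_one hSV
    refine ⟨U, V, hUS.symm ▸ hSU, hVS.symm ▸ hSV, ?_,
      fun x => ⟨(hU U).2 hUS.symm x, (hV V).2 hVS.symm x⟩⟩
    exact IsPABS.comp_map ⟨⟨θg, hθg⟩, ⟨θω, hθω⟩⟩ (U.symm : X →L[ℝ] X) (V.symm : X →L[ℝ] X)
  · rintro ⟨U, V, hUn, hVn, -, hdual⟩
    rw [(hU U).1 fun x => (hdual x).1, (hV V).1 fun x => (hdual x).2]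
    exact ⟨hVn, hUn⟩

/-- a p-ABS `({g_n},{ω_n})` is an approximately dual p-ABS for `({f_n},{τ_n})`
iff there are bounded invertible `U, V : X → X` with `‖I - U‖ < 1`, `‖I - V‖ < 1` such that
`({g_n ∘ U⁻¹}, {V⁻¹ ω_n})` is a dual p-ABS for `({f_n},{τ_n})`. -/
theorem approx_dual_iff_perturbed_dual
    {X : Type*} [NormedAddCommGroup X] [NormedSpace ℝ X] [CompleteSpace X]
    (p : ℝ≥0∞) [Fact (1 ≤ p)] (hp : p ≠ ∞)
    (f g : ℕ → X →L[ℝ] ℝ) (τ ω : ℕ → X)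
    (θf θg : X →L[ℝ] lpN p) (θτ θω : lpN p →L[ℝ] X)
    (hθf : ∀ (x : X) (n : ℕ), (θf x) n = f n x)
    (hθg : ∀ (x : X) (n : ℕ), (θg x) n = g n x)
    (hθτ : ∀ a : lpN p, HasSum (fun n => (a n) • τ n) (θτ a))
    (hθω : ∀ a : lpN p, HasSum (fun n => (a n) • ω n) (θω a)) :
    (‖ContinuousLinearMap.id ℝ X - θω.comp θf‖ < 1 ∧
     ‖ContinuousLinearMap.id ℝ X - θτ.comp θg‖ < 1) ↔
    ∃ U V : X ≃L[ℝ] X,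
      ‖ContinuousLinearMap.id ℝ X - (U : X →L[ℝ] X)‖ < 1 ∧
      ‖ContinuousLinearMap.id ℝ X - (V : X →L[ℝ] X)‖ < 1 ∧
      IsPABS p (fun n => (g n).comp (U.symm : X →L[ℝ] X)) (fun n => V.symm (ω n)) ∧
      (∀ x : X,
        HasSum (fun n => g n (U.symm x) • τ n) x ∧
        HasSum (fun n => f n x • V.symm (ω n)) x) :=
  approx_dual_iff_perturbed_dual_general p f g τ ω θf θg θτ θω hθf hθg hθτ hθω
end
end

section
/- Let (\{f_n\},\{τ_n\}) and (\{g_n\},\{ω_n\}) be approximately dual p-ABSs for X. For N ∈ ℕ define ρ_n^{(N)} := Σ_{m=0}^N (I_X − S_{f,ω})^m ω_n. Then the operator θ_ρ^{(N)} θ_f (x ↦ Σ_n f_n(x) ρ_n^{(N)}) satisfies θ_ρ^{(N)} θ_f x = x − (I_X − S_{f,ω})^{N+1} x for all x, and hence ‖I_X − θ_ρ^{(N)} θ_f‖ ≤ ‖I_X − S_{f,ω}‖^{N+1} → 0 as N → ∞. -/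
open scoped ENNReal
open Filter Topology

noncomputable section

/-!
Writing `S = θ_ω θ_f` and `T = I - S`, the operator `θ_ρ^{(N)} θ_f` equals `(Σ_{m ≤ N} Tᵐ) S`,
a partial Neumann series for `S⁻¹` applied to `S`; the geometric-sum telescope turns it into
`I - T^{N+1}`. The series expansion follows by pushing the synthesis series `θ_ω (θ_f x)`
through the bounded operator `Σ_{m ≤ N} Tᵐ`.
-/

namespace ContinuousLinearMap

variable {𝕜 X : Type*} [NontriviallyNormedField 𝕜] [NormedAddCommGroup X] [NormedSpace 𝕜 X]

theorem geom_sum_id_sub_comp (S : X →L[𝕜] X) (n : ℕ) :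
    (∑ m ∈ Finset.range n, (.id 𝕜 X - S) ^ m).comp S = .id 𝕜 X - (.id 𝕜 X - S) ^ n := by
  simpa only [← one_def, ← mul_def, sub_sub_cancel] using geom_sum_mul_neg (1 - S) n

theorem norm_id_sub_geom_sum_id_sub_comp_le (S : X →L[𝕜] X) (n : ℕ) :
    ‖.id 𝕜 X - (∑ m ∈ Finset.range (n + 1), (.id 𝕜 X - S) ^ m).comp S‖ ≤
      ‖.id 𝕜 X - S‖ ^ (n + 1) := by
  rw [geom_sum_id_sub_comp, sub_sub_cancel]
  exact norm_pow_le' _ n.succ_pos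

end ContinuousLinearMap

theorem hasSum_smul_map_of_synthesis {X : Type*} [NormedAddCommGroup X] [NormedSpace ℝ X]
    {p : ℝ≥0∞} [Fact (1 ≤ p)] {f : ℕ → X →L[ℝ] ℝ} {ω : ℕ → X}
    {θf : X →L[ℝ] lpN p} {θω : lpN p →L[ℝ] X}
    (hθf : ∀ (x : X) (n : ℕ), (θf x) n = f n x)
    (hθω : ∀ a : lpN p, HasSum (fun n => (a n) • ω n) (θω a)) (A : X →L[ℝ] X) (x : X) :
    HasSum (fun n => f n x • A (ω n)) (A (θω (θf x))) := by
  simpa only [hθf, map_smul] using (hθω (θf x)).mapL A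

theorem approx_dual_iteration_synthesis_general
    {X : Type*} [NormedAddCommGroup X] [NormedSpace ℝ X]
    (p : ℝ≥0∞) [Fact (1 ≤ p)]
    (f : ℕ → X →L[ℝ] ℝ) (ω : ℕ → X)
    (θf : X →L[ℝ] lpN p) (θω : lpN p →L[ℝ] X)
    (hθf : ∀ (x : X) (n : ℕ), (θf x) n = f n x)
    (hθω : ∀ a : lpN p, HasSum (fun n => (a n) • ω n) (θω a))
    (h1 : ‖ContinuousLinearMap.id ℝ X - θω.comp θf‖ < 1) :
    (∀ N : ℕ,
      (∀ x : X,
        HasSum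
          (fun n => f n x •
            ((∑ m ∈ Finset.range (N + 1),
              (ContinuousLinearMap.id ℝ X - θω.comp θf) ^ m) (ω n)))
          (x - ((ContinuousLinearMap.id ℝ X - θω.comp θf) ^ (N + 1)) x)) ∧
      ‖ContinuousLinearMap.id ℝ X -
        (∑ m ∈ Finset.range (N + 1),
          (ContinuousLinearMap.id ℝ X - θω.comp θf) ^ m).comp (θω.comp θf)‖ ≤
        ‖ContinuousLinearMap.id ℝ X - θω.comp θf‖ ^ (N + 1)) ∧
    Tendsto (fun N : ℕ => ‖ContinuousLinearMap.id ℝ X - θω.comp θf‖ ^ (N + 1))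
      atTop (nhds 0) := by
  refine ⟨fun N => ⟨fun x => ?_, ?_⟩, ?_⟩
  · have hsum := hasSum_smul_map_of_synthesis hθf hθω
      (∑ m ∈ Finset.range (N + 1), (ContinuousLinearMap.id ℝ X - θω.comp θf) ^ m) x
    have hS := DFunLike.congr_fun
      (ContinuousLinearMap.geom_sum_id_sub_comp (θω.comp θf) (N + 1)) x
    simp only [ContinuousLinearMap.comp_apply, sub_apply,
      ContinuousLinearMap.id_apply] at hS
    rwa [hS] at hsum
  · exact ContinuousLinearMap.norm_id_sub_geom_sum_id_sub_comp_le _ N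
  · exact (tendsto_pow_atTop_nhds_zero_of_lt_one (norm_nonneg _) h1).comp
      (tendsto_add_atTop_nat 1)

/-- with `ρ_n^{(N)} := Σ_{m=0}^N (I - S_{f,ω})^m ω_n`, one has
`θ_ρ^{(N)} θ_f x = x - (I - S_{f,ω})^{N+1} x`, hence
`‖I - θ_ρ^{(N)} θ_f‖ ≤ ‖I - S_{f,ω}‖^{N+1} → 0`. -/
theorem approx_dual_iteration_synthesis
    {X : Type*} [NormedAddCommGroup X] [NormedSpace ℝ X] [CompleteSpace X]
    (p : ℝ≥0∞) [Fact (1 ≤ p)] (hp : p ≠ ∞)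
    (f g : ℕ → X →L[ℝ] ℝ) (τ ω : ℕ → X)
    (θf θg : X →L[ℝ] lpN p) (θτ θω : lpN p →L[ℝ] X)
    (hθf : ∀ (x : X) (n : ℕ), (θf x) n = f n x)
    (hθg : ∀ (x : X) (n : ℕ), (θg x) n = g n x)
    (hθτ : ∀ a : lpN p, HasSum (fun n => (a n) • τ n) (θτ a))
    (hθω : ∀ a : lpN p, HasSum (fun n => (a n) • ω n) (θω a))
    (h1 : ‖ContinuousLinearMap.id ℝ X - θω.comp θf‖ < 1)
    (h2 : ‖ContinuousLinearMap.id ℝ X - θτ.comp θg‖ < 1) :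
    (∀ N : ℕ,
      (∀ x : X,
        HasSum
          (fun n => f n x •
            ((∑ m ∈ Finset.range (N + 1),
              (ContinuousLinearMap.id ℝ X - θω.comp θf) ^ m) (ω n)))
          (x - ((ContinuousLinearMap.id ℝ X - θω.comp θf) ^ (N + 1)) x)) ∧
      ‖ContinuousLinearMap.id ℝ X -
        (∑ m ∈ Finset.range (N + 1),
          (ContinuousLinearMap.id ℝ X - θω.comp θf) ^ m).comp (θω.comp θf)‖ ≤
        ‖ContinuousLinearMap.id ℝ X - θω.comp θf‖ ^ (N + 1)) ∧
    Tendsto (fun N : ℕ => ‖ContinuousLinearMap.id ℝ X - θω.comp θf‖ ^ (N + 1))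
      atTop (nhds 0) :=
  approx_dual_iteration_synthesis_general p f ω θf θω hθf hθω h1
end
end

section
/- Let (\{f_n\},\{τ_n\}) and (\{g_n\},\{ω_n\}) be approximately dual p-ABSs for X. For N ∈ ℕ define h_n^{(N)} := Σ_{m=0}^N g_n ∘ (I_X − S_{g,τ})^m. Then Σ_n h_n^{(N)}(x) τ_n = x − (I_X − S_{g,τ})^{N+1} x for all x ∈ X, and hence ‖I_X − θ_τ θ_h^{(N)}‖ ≤ ‖I_X − S_{g,τ}‖^{N+1} → 0 as N → ∞. -/
open scoped ENNReal
open Filter Topology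

noncomputable section

/-- with `h_n^{(N)} := Σ_{m=0}^N g_n ∘ (I - S_{g,τ})^m`, one has
`Σ_n h_n^{(N)}(x) τ_n = x - (I - S_{g,τ})^{N+1} x`, hence
`‖I - θ_τ θ_h^{(N)}‖ ≤ ‖I - S_{g,τ}‖^{N+1} → 0`. -/
theorem approx_dual_iteration_analysis
    {X : Type*} [NormedAddCommGroup X] [NormedSpace ℝ X] [CompleteSpace X]
    (p : ℝ≥0∞) [Fact (1 ≤ p)] (hp : p ≠ ∞)
    (f g : ℕ → X →L[ℝ] ℝ) (τ ω : ℕ → X)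
    (θf θg : X →L[ℝ] lpN p) (θτ θω : lpN p →L[ℝ] X)
    (hθf : ∀ (x : X) (n : ℕ), (θf x) n = f n x)
    (hθg : ∀ (x : X) (n : ℕ), (θg x) n = g n x)
    (hθτ : ∀ a : lpN p, HasSum (fun n => (a n) • τ n) (θτ a))
    (hθω : ∀ a : lpN p, HasSum (fun n => (a n) • ω n) (θω a))
    (h1 : ‖ContinuousLinearMap.id ℝ X - θω.comp θf‖ < 1)
    (h2 : ‖ContinuousLinearMap.id ℝ X - θτ.comp θg‖ < 1) :
    (∀ N : ℕ,
      (∀ x : X,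
        HasSum
          (fun n =>
            (∑ m ∈ Finset.range (N + 1),
              g n (((ContinuousLinearMap.id ℝ X - θτ.comp θg) ^ m) x)) • τ n)
          (x - ((ContinuousLinearMap.id ℝ X - θτ.comp θg) ^ (N + 1)) x)) ∧
      ‖ContinuousLinearMap.id ℝ X -
        (θτ.comp θg).comp
          (∑ m ∈ Finset.range (N + 1),
            (ContinuousLinearMap.id ℝ X - θτ.comp θg) ^ m)‖ ≤
        ‖ContinuousLinearMap.id ℝ X - θτ.comp θg‖ ^ (N + 1)) ∧
    Tendsto (fun N : ℕ => ‖ContinuousLinearMap.id ℝ X - θτ.comp θg‖ ^ (N + 1))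
      atTop (nhds 0) := by
  set T := ContinuousLinearMap.id ℝ X - θτ.comp θg with hT
  have hS : θτ.comp θg = 1 - T := by
    rw [hT]; rw [ContinuousLinearMap.one_def]; abel
  have key : ∀ N : ℕ, (θτ.comp θg).comp (∑ m ∈ Finset.range (N + 1), T ^ m)
      = ContinuousLinearMap.id ℝ X - T ^ (N + 1) := by
    intro N
    have : (θτ.comp θg).comp (∑ m ∈ Finset.range (N + 1), T ^ m)
        = (1 - T) * (∑ m ∈ Finset.range (N + 1), T ^ m) := by
      rw [hS]; rfl
    rw [this]
    have := mul_geom_sum (n := N + 1) (x := T)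
    have h3 : (1 - T) * (∑ m ∈ Finset.range (N + 1), T ^ m)
        = -((T - 1) * ∑ m ∈ Finset.range (N + 1), T ^ m) := by
      rw [← neg_sub T 1, neg_mul]
    rw [h3, this, ContinuousLinearMap.one_def.symm]
    abel
  have hTnorm : 0 ≤ ‖T‖ := norm_nonneg _
  refine ⟨fun N => ⟨fun x => ?_, ?_⟩, ?_⟩
  · -- HasSum part
    set y := (∑ m ∈ Finset.range (N + 1), T ^ m) x with hy
    have hsum := hθτ (θg y)
    have ha : ∀ n, (θg y) n = ∑ m ∈ Finset.range (N + 1),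
        g n ((T ^ m) x) := by
      intro n
      rw [hθg]
      rw [hy, ContinuousLinearMap.sum_apply, map_sum]
    have hval : θτ (θg y) = x - (T ^ (N + 1)) x := by
      have h4 : θτ (θg y)
          = ((θτ.comp θg).comp (∑ m ∈ Finset.range (N + 1), T ^ m)) x := rfl
      rw [h4, key N]
      simp
    rw [hval] at hsum
    convert hsum using 2 with n
    rw [ha n]
  · -- norm bound
    rw [key N]
    have : ContinuousLinearMap.id ℝ X - (ContinuousLinearMap.id ℝ X - T ^ (N + 1))
        = T ^ (N + 1) := by abel
    rw [this]
    calc ‖T ^ (N + 1)‖ ≤ ‖T‖ ^ (N + 1) := norm_pow_le' T (Nat.succ_pos N)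
      _ = ‖T‖ ^ (N + 1) := rfl
  · have := (tendsto_pow_atTop_nhds_zero_of_lt_one hTnorm h2).comp
      (tendsto_add_atTop_nat 1)
    exact this
end
end

section
/- Let \{τ_n\} ⊂ X, \{f_n\} ⊂ X*, and let (\{h_n\},\{ρ_n\}) be a p-ASF for X such that (Σ_n |f_n(x) − h_n(x)|^p)^{1/p} ≤ R‖x‖ for all x ∈ X and ‖Σ_n a_n(ρ_n − τ_n)‖ ≤ Q‖(a_n)‖_p for all (a_n) ∈ ℓ^p(ℕ). Let (\{g_n\},\{ω_n\}) be a dual for (\{h_n\},\{ρ_n\}) with analysis bound c (‖θ_g‖ ≤ c) and synthesis bound d (‖θ_ω‖ ≤ d). If dR < 1 and cQ < 1, then (\{f_n\},\{τ_n\}) is a p-ABS for X and (\{g_n\},\{ω_n\}) is an approximately dual p-ABS for (\{f_n\},\{τ_n\}). -/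
open scoped ENNReal
open Filter Topology

noncomputable section

/-- sequences close to a p-ASF admit approximate duals: if `({h_n},{ρ_n})`
is a p-ASF, `(Σ|f_n(x)-h_n(x)|^p)^{1/p} ≤ R‖x‖`, `‖Σ a_n(ρ_n-τ_n)‖ ≤ Q‖a‖_p`, and
`({g_n},{ω_n})` is a dual for `({h_n},{ρ_n})` with `‖θ_g‖ ≤ c`, `‖θ_ω‖ ≤ d`, `dR < 1`,
`cQ < 1`, then `({f_n},{τ_n})` is a p-ABS and `({g_n},{ω_n})` is an approximately dual
p-ABS for it. -/
theorem perturbation_gives_approx_dual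
    {X : Type*} [NormedAddCommGroup X] [NormedSpace ℝ X] [CompleteSpace X]
    (p : ℝ≥0∞) [Fact (1 ≤ p)] (hp : p ≠ ∞)
    (f : ℕ → X →L[ℝ] ℝ) (τ : ℕ → X)
    (h : ℕ → X →L[ℝ] ℝ) (ρ : ℕ → X)
    (θh : X →L[ℝ] lpN p) (θρ : lpN p →L[ℝ] X) (Shρ : X ≃L[ℝ] X)
    (hθh : ∀ (x : X) (n : ℕ), (θh x) n = h n x)
    (hθρ : ∀ a : lpN p, HasSum (fun n => (a n) • ρ n) (θρ a))
    (hShρ : (Shρ : X →L[ℝ] X) = θρ.comp θh)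
    (R Q c d : ℝ)
    (hRsum : ∀ x : X, Summable (fun n => |f n x - h n x| ^ p.toReal))
    (hRest : ∀ x : X, (∑' n, |f n x - h n x| ^ p.toReal) ^ (1 / p.toReal) ≤ R * ‖x‖)
    (hQest : ∀ a : lpN p, ∃ y : X,
      HasSum (fun n => (a n) • (ρ n - τ n)) y ∧ ‖y‖ ≤ Q * ‖a‖)
    (g : ℕ → X →L[ℝ] ℝ) (ω : ℕ → X)
    (θg : X →L[ℝ] lpN p) (θω : lpN p →L[ℝ] X)
    (hθg : ∀ (x : X) (n : ℕ), (θg x) n = g n x)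
    (hθω : ∀ a : lpN p, HasSum (fun n => (a n) • ω n) (θω a))
    (hdual₁ : θρ.comp θg = ContinuousLinearMap.id ℝ X)
    (hdual₂ : θω.comp θh = ContinuousLinearMap.id ℝ X)
    (hc : ‖θg‖ ≤ c) (hd : ‖θω‖ ≤ d)
    (hdR : d * R < 1) (hcQ : c * Q < 1) :
    IsPABS p f τ ∧
    ∀ (θf : X →L[ℝ] lpN p) (θτ : lpN p →L[ℝ] X),
      (∀ (x : X) (n : ℕ), (θf x) n = f n x) →
      (∀ a : lpN p, HasSum (fun n => (a n) • τ n) (θτ a)) →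
      ‖ContinuousLinearMap.id ℝ X - θω.comp θf‖ < 1 ∧
      ‖ContinuousLinearMap.id ℝ X - θτ.comp θg‖ < 1 := by
  have hp1 : (1:ℝ≥0∞) ≤ p := Fact.out
  have hp0 : p ≠ 0 := by
    intro h0; rw [h0] at hp1; exact absurd hp1 (by simp)
  have hpt : 0 < p.toReal := ENNReal.toReal_pos hp0 hp
  have hc0 : (0:ℝ) ≤ c := (norm_nonneg _).trans hc
  have hd0 : (0:ℝ) ≤ d := (norm_nonneg _).trans hd
  -- the difference analysis operator D
  have memD : ∀ x : X, Memℓp (fun n => f n x - h n x) p := by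
    intro x
    apply memℓp_gen
    simpa [Real.norm_eq_abs] using hRsum x
  let D₀ : X → lpN p := fun x => ⟨fun n => f n x - h n x, memD x⟩
  have hD₀coe : ∀ (x : X) (n : ℕ), (D₀ x) n = f n x - h n x := fun x n => rfl
  have hD₀norm : ∀ x : X, ‖D₀ x‖ ≤ R * ‖x‖ := by
    intro x
    rw [lp.norm_eq_tsum_rpow hpt]
    simpa [Real.norm_eq_abs] using hRest x
  let Dlin : X →ₗ[ℝ] lpN p :=
    { toFun := D₀
      map_add' := by
        intro x y
        apply lp.ext
        funext n
        simp [hD₀coe, map_add]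
        ring
      map_smul' := by
        intro r x
        apply lp.ext
        funext n
        simp [hD₀coe, map_smul, smul_eq_mul]
        ring }
  let D : X →L[ℝ] lpN p := Dlin.mkContinuous (max R 0) (by
    intro x
    exact (hD₀norm x).trans
      (mul_le_mul_of_nonneg_right (le_max_left _ _) (norm_nonneg x)))
  have hDcoe : ∀ (x : X) (n : ℕ), (D x) n = f n x - h n x := fun x n => rfl
  -- the difference synthesis operator E
  let E₀ : lpN p → X := fun a => (hQest a).choose
  have hEsum : ∀ a : lpN p, HasSum (fun n => (a n) • (ρ n - τ n)) (E₀ a) :=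
    fun a => (hQest a).choose_spec.1
  have hEnorm : ∀ a : lpN p, ‖E₀ a‖ ≤ Q * ‖a‖ := fun a => (hQest a).choose_spec.2
  let Elin : lpN p →ₗ[ℝ] X :=
    { toFun := E₀
      map_add' := by
        intro a b
        refine (hEsum (a + b)).unique ?_
        have h1 := (hEsum a).add (hEsum b)
        convert h1 using 1
        funext n
        have : (a + b : lpN p) n = a n + b n := by
          simp [lp.coeFn_add]
        rw [this, add_smul]
      map_smul' := by
        intro r a
        refine (hEsum (r • a)).unique ?_
        have h1 := (hEsum a).const_smul r
        convert h1 using 1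
        funext n
        have : (r • a : lpN p) n = r * a n := by
          simp [lp.coeFn_smul]
        rw [this, smul_smul]
        rfl }
  let E : lpN p →L[ℝ] X := Elin.mkContinuous (max Q 0) (by
    intro a
    exact (hEnorm a).trans
      (mul_le_mul_of_nonneg_right (le_max_left _ _) (norm_nonneg a)))
  have hEcoe : ∀ a : lpN p, E a = E₀ a := fun a => rfl
  constructor
  · constructor
    · refine ⟨θh + D, ?_⟩
      intro x n
      have : ((θh + D) x) n = (θh x) n + (D x) n := by
        simp [lp.coeFn_add]
      rw [this, hθh x n, hDcoe x n]
      ring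
    · refine ⟨θρ - E, ?_⟩
      intro a
      have h1 := (hθρ a).sub (hEsum a)
      have : ((θρ - E) a) = θρ a - E₀ a := by simp [hEcoe]
      rw [this]
      convert h1 using 1
      funext n
      rw [smul_sub, sub_sub_cancel]
  · intro θf θτ hθf hθτ
    -- key estimates
    have keyA : ∀ x : X, ‖θh x - θf x‖ ≤ R * ‖x‖ := by
      intro x
      have hcoeff : ∀ n : ℕ, (θh x - θf x) n = h n x - f n x := by
        intro n
        have : (θh x - θf x) n = (θh x) n - (θf x) n := by simp [lp.coeFn_sub]
        rw [this, hθh x n, hθf x n]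
      rw [lp.norm_eq_tsum_rpow hpt]
      calc (∑' n, ‖(θh x - θf x) n‖ ^ p.toReal) ^ (1 / p.toReal)
          = (∑' n, |f n x - h n x| ^ p.toReal) ^ (1 / p.toReal) := by
            congr 1
            apply tsum_congr
            intro n
            rw [hcoeff n, Real.norm_eq_abs, abs_sub_comm]
        _ ≤ R * ‖x‖ := hRest x
    have keyB : ∀ a : lpN p, ‖θρ a - θτ a‖ ≤ Q * ‖a‖ := by
      intro a
      obtain ⟨y, hy1, hy2⟩ := hQest a
      have h1 := (hθρ a).sub (hθτ a)
      have h2 : HasSum (fun n => (a n) • (ρ n - τ n)) (θρ a - θτ a) := by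
        convert h1 using 1
        funext n
        rw [smul_sub]
      rw [h2.unique hy1]
      exact hy2
    constructor
    · have heq : ContinuousLinearMap.id ℝ X - θω.comp θf = θω.comp (θh - θf) := by
        rw [ContinuousLinearMap.comp_sub, hdual₂]
      rw [heq]
      have hbound : ‖θω.comp (θh - θf)‖ ≤ max (d * R) 0 := by
        apply ContinuousLinearMap.opNorm_le_bound _ (le_max_right _ _)
        intro x
        have h1 : ‖θω ((θh - θf) x)‖ ≤ d * ‖(θh - θf) x‖ :=
          (θω.le_opNorm _).trans
            (mul_le_mul_of_nonneg_right hd (norm_nonneg _))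
        have h2 : ‖(θh - θf) x‖ ≤ R * ‖x‖ := by
          simpa using keyA x
        calc ‖(θω.comp (θh - θf)) x‖ = ‖θω ((θh - θf) x)‖ := rfl
          _ ≤ d * ‖(θh - θf) x‖ := h1
          _ ≤ d * (R * ‖x‖) := mul_le_mul_of_nonneg_left h2 hd0
          _ = d * R * ‖x‖ := by ring
          _ ≤ max (d * R) 0 * ‖x‖ :=
            mul_le_mul_of_nonneg_right (le_max_left _ _) (norm_nonneg x)
      exact lt_of_le_of_lt hbound (max_lt hdR one_pos)
    · have heq : ContinuousLinearMap.id ℝ X - θτ.comp θg = (θρ - θτ).comp θg := by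
        rw [ContinuousLinearMap.sub_comp, hdual₁]
      rw [heq]
      have hbound : ‖(θρ - θτ).comp θg‖ ≤ max (c * Q) 0 := by
        apply ContinuousLinearMap.opNorm_le_bound _ (le_max_right _ _)
        intro x
        have h1 : ‖(θρ - θτ) (θg x)‖ ≤ Q * ‖θg x‖ := by
          simpa using keyB (θg x)
        have h2 : ‖θg x‖ ≤ c * ‖x‖ :=
          (θg.le_opNorm _).trans
            (mul_le_mul_of_nonneg_right hc (norm_nonneg _))
        rcases le_or_gt 0 Q with hQ | hQ
        · calc ‖((θρ - θτ).comp θg) x‖ = ‖(θρ - θτ) (θg x)‖ := rfl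
            _ ≤ Q * ‖θg x‖ := h1
            _ ≤ Q * (c * ‖x‖) := mul_le_mul_of_nonneg_left h2 hQ
            _ = c * Q * ‖x‖ := by ring
            _ ≤ max (c * Q) 0 * ‖x‖ :=
              mul_le_mul_of_nonneg_right (le_max_left _ _) (norm_nonneg x)
        · have h3 : Q * ‖θg x‖ ≤ 0 :=
            mul_nonpos_of_nonpos_of_nonneg hQ.le (norm_nonneg _)
          have h4 : ‖(θρ - θτ) (θg x)‖ = 0 :=
            le_antisymm (h1.trans h3) (norm_nonneg _)
          calc ‖((θρ - θτ).comp θg) x‖ = ‖(θρ - θτ) (θg x)‖ := rfl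
            _ = 0 := h4
            _ ≤ max (c * Q) 0 * ‖x‖ :=
              mul_nonneg (le_max_right _ _) (norm_nonneg x)
      exact lt_of_le_of_lt hbound (max_lt hcQ one_pos)
end
end

section
/- Let (\{f_n\},\{τ_n\}) be a p-ASF for X, let U : X → ℓ^p(ℕ) and V : ℓ^p(ℕ) → X be bounded operators, and define g_n := f_n S_{f,τ}^{-1} + ζ_n U − f_n S_{f,τ}^{-1} θ_τ U and ω_n := S_{f,τ}^{-1} τ_n + V e_n − V θ_f S_{f,τ}^{-1} τ_n. If the operator S_{f,τ}^{-1} + VU − V θ_f S_{f,τ}^{-1} θ_τ U is bounded invertible, then (\{g_n\},\{ω_n\}) is a dual p-ASF for (\{f_n\},\{τ_n\}): x = Σ_n g_n(x) τ_n = Σ_n f_n(x) ω_n for all x ∈ X. -/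
open scoped ENNReal
open Filter Topology

noncomputable section

/-- construction of dual p-ASFs: with
`g_n = f_n S⁻¹ + ζ_n U - f_n S⁻¹ θ_τ U` and `ω_n = S⁻¹ τ_n + V e_n - V θ_f S⁻¹ τ_n`,
if `S⁻¹ + VU - V θ_f S⁻¹ θ_τ U` is bounded invertible, then `({g_n},{ω_n})` is a
dual p-ASF for `({f_n},{τ_n})`. -/
theorem dual_pASF_construction
    {X : Type*} [NormedAddCommGroup X] [NormedSpace ℝ X] [CompleteSpace X]
    (p : ℝ≥0∞) [Fact (1 ≤ p)] (hp : p ≠ ∞)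
    (f : ℕ → X →L[ℝ] ℝ) (τ : ℕ → X)
    (θf : X →L[ℝ] lpN p) (θτ : lpN p →L[ℝ] X) (S : X ≃L[ℝ] X)
    (hθf : ∀ (x : X) (n : ℕ), (θf x) n = f n x)
    (hθτ : ∀ a : lpN p, HasSum (fun n => (a n) • τ n) (θτ a))
    (hS : (S : X →L[ℝ] X) = θτ.comp θf)
    (ζ : ℕ → lpN p →L[ℝ] ℝ) (hζ : ∀ (a : lpN p) (n : ℕ), ζ n a = a n)
    (U : X →L[ℝ] lpN p) (V : lpN p →L[ℝ] X)
    (g : ℕ → X →L[ℝ] ℝ) (ω : ℕ → X)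
    (hg : ∀ n : ℕ, g n = (f n).comp (S.symm : X →L[ℝ] X) + (ζ n).comp U -
      (f n).comp (((S.symm : X →L[ℝ] X).comp θτ).comp U))
    (hω : ∀ n : ℕ, ω n = S.symm (τ n) + V (lp.single p n 1) -
      V (θf (S.symm (τ n))))
    (W : X ≃L[ℝ] X)
    (hW : (W : X →L[ℝ] X) = (S.symm : X →L[ℝ] X) + V.comp U -
      (V.comp (θf.comp ((S.symm : X →L[ℝ] X).comp (θτ.comp U))))) :
    IsPASF p g ω ∧
    (∀ x : X, HasSum (fun n => g n x • τ n) x ∧ HasSum (fun n => f n x • ω n) x) := by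
  classical
  have key : ∀ y : X, θτ (θf y) = S y := fun y => (ContinuousLinearMap.ext_iff.mp hS y).symm
  set Sc : X →L[ℝ] X := (S.symm : X →L[ℝ] X) with hSc
  let θg : X →L[ℝ] lpN p := (θf.comp Sc) + U - θf.comp (Sc.comp (θτ.comp U))
  let θω : lpN p →L[ℝ] X := Sc.comp θτ + V - V.comp (θf.comp (Sc.comp θτ))
  have hθg : ∀ (x : X) (n : ℕ), (θg x) n = g n x := by
    intro x n
    have h1 : (θg x) = θf (Sc x) + U x - θf (Sc (θτ (U x))) := rfl
    rw [hg, h1]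
    simp [lp.coeFn_add, lp.coeFn_sub, hθf, hζ, Pi.add_apply, Pi.sub_apply]
  have hθω : ∀ a : lpN p, HasSum (fun n => (a n) • ω n) (θω a) := by
    intro a
    have h1 : HasSum (fun n => (a n) • Sc (τ n)) (Sc (θτ a)) := by
      have := Sc.hasSum (hθτ a)
      simpa [map_smul] using this
    have h2 : HasSum (fun n => (a n) • V (lp.single p n 1)) (V a) := by
      have := V.hasSum (lp.hasSum_single hp a)
      have e : ∀ n : ℕ, V (lp.single p n (a n)) = (a n) • V (lp.single p n 1) := by
        intro n
        have e1 : (a n) • (lp.single p n (1:ℝ) : lpN p) = lp.single p n (a n) := by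
          ext m
          rcases eq_or_ne m n with h | h
          · subst h; simp [lp.single_apply_self]
          · simp [lp.single_apply_ne p n _ h, Pi.single_apply, h]
        rw [← e1, map_smul]
      simpa [e] using this
    have h3 : HasSum (fun n => (a n) • V (θf (Sc (τ n)))) (V (θf (Sc (θτ a)))) := by
      have := ((V.comp θf).comp Sc).hasSum (hθτ a)
      simpa [map_smul] using this
    have hcomb := (h1.add h2).sub h3
    have e2 : (fun n => (a n) • Sc (τ n) + (a n) • V (lp.single p n 1)
        - (a n) • V (θf (Sc (τ n)))) = fun n => (a n) • ω n := by
      funext n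
      rw [hω n, smul_sub, smul_add]
      simp [hSc]
    have e3 : θω a = Sc (θτ a) + V a - V (θf (Sc (θτ a))) := rfl
    rw [e2] at hcomb
    rw [e3]
    exact hcomb
  have id1 : ∀ x : X, θτ (θg x) = x := by
    intro x
    have h1 : (θg x) = θf (Sc x) + U x - θf (Sc (θτ (U x))) := rfl
    rw [h1, map_sub, map_add, key, key]
    simp [hSc]
  have id2 : ∀ x : X, θω (θf x) = x := by
    intro x
    have h1 : θω (θf x) = Sc (θτ (θf x)) + V (θf x) - V (θf (Sc (θτ (θf x)))) := rfl
    rw [h1, key]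
    simp [hSc]
  have hSW : (W : X →L[ℝ] X) = θω.comp θg := by
    ext x
    show (W : X →L[ℝ] X) x = θω (θg x)
    have h1 : θω (θg x) = Sc (θτ (θg x)) + V (θg x) - V (θf (Sc (θτ (θg x)))) := rfl
    have h2 : V (θg x) = V (θf (Sc x)) + V (U x) - V (θf (Sc (θτ (U x)))) := by
      have hx : (θg x) = θf (Sc x) + U x - θf (Sc (θτ (U x))) := rfl
      rw [hx, map_sub, map_add]
    have h3 : (W : X →L[ℝ] X) x = Sc x + V (U x) - V (θf (Sc (θτ (U x)))) := by
      rw [hW]; rfl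
    rw [h3, h1, id1 x, h2]
    abel
  refine ⟨⟨θg, θω, W, hθg, hθω, hSW⟩, fun x => ⟨?_, ?_⟩⟩
  · have := hθτ (θg x)
    rw [id1] at this
    simpa [hθg] using this
  · have := hθω (θf x)
    rw [id2] at this
    simpa [hθf] using this
end
end
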